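/- arXiv:1912.00853 — 2 statements merged into one kernel-verified Lean document; each statement's English description precedes it below -/
import Mathlib

section
/- Let k ≥ 1 and γ₀ ≥ 3. Then the sum ∑_{n ≥ ⌈log γ₀⌉} exp(−k n²/2) · log(n + γ₀) is at most 1/2. -/
/-!
For `n ≥ ⌈log γ₀⌉` we have `γ₀ ≤ eⁿ`, so `log (n + γ₀) ≤ n + 1`, and with `k ≥ 1` the `n`-th
term is at most `(n + 1) e^{-n²/2}`. Since `log γ₀ > 1`, only `n ≥ 2` contribute, and there
`(n + 1) e^{-n²/2} ≤ 3 e^{-2} (e^{-2})^{n-2}`. This geometric series sums to `3 / (e² - 1) < 1/2`.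
-/

open Real

lemma one_lt_log_of_three_le {x : ℝ} (hx : 3 ≤ x) : 1 < log x := by
  rw [lt_log_iff_exp_lt (by linarith)]
  linarith [exp_one_lt_d9]

lemma log_add_le_add_one_of_le_exp {x y : ℝ} (hx : 0 ≤ x) (hy : 0 < y) (hyx : y ≤ exp x) :
    log (x + y) ≤ x + 1 := by
  rw [log_le_iff_le_exp (by linarith), exp_add]
  -- `x + y ≤ 2 eˣ - 1 < e · eˣ`, using `x + 1 ≤ eˣ`
  nlinarith [add_one_le_exp x, exp_one_gt_d9, exp_pos x]

lemma exp_neg_mul_sq_mul_log_add_le {k x y : ℝ} (hk : 1 ≤ k) (hx : 0 ≤ x) (hy : 1 ≤ y)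
    (hyx : y ≤ exp x) :
    exp (-(k * x ^ 2 / 2)) * log (x + y) ≤ (x + 1) * exp (-(x ^ 2 / 2)) := by
  rw [mul_comm (x + 1)]
  gcongr
  · exact log_nonneg (by linarith)
  · nlinarith [sq_nonneg x]
  · exact log_add_le_add_one_of_le_exp hx (by linarith) hyx

lemma succ_mul_exp_neg_sq_half_le_geometric (n : ℕ) :
    ((n + 2 : ℕ) + 1 : ℝ) * exp (-(((n + 2 : ℕ) : ℝ) ^ 2 / 2)) ≤
      3 * exp (-2) * exp (-2) ^ n := by
  have hn : (n : ℝ) / 3 ≤ n ^ 2 / 2 := by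
    rcases Nat.eq_zero_or_pos n with rfl | hn
    · simp
    · nlinarith [(Nat.one_le_cast (α := ℝ)).mpr hn]
  have hsplit : exp (-(((n + 2 : ℕ) : ℝ) ^ 2 / 2)) =
      exp (-(n ^ 2 / 2)) * (exp (-2) * exp (-2) ^ n) := by
    rw [← exp_nat_mul, ← exp_add, ← exp_add]
    push_cast
    ring_nf
  have hpoly : ((n + 2 : ℕ) + 1 : ℝ) * exp (-(n ^ 2 / 2)) ≤ 3 :=
    calc ((n + 2 : ℕ) + 1 : ℝ) * exp (-(n ^ 2 / 2))
        ≤ 3 * (n ^ 2 / 2 + 1) * exp (-(n ^ 2 / 2)) := by gcongr; push_cast; linarith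
      _ ≤ 3 * exp (n ^ 2 / 2) * exp (-(n ^ 2 / 2)) := by gcongr; exact add_one_le_exp _
      _ = 3 := by rw [mul_assoc, ← exp_add, add_neg_cancel, exp_zero, mul_one]
  rw [hsplit, ← mul_assoc, mul_assoc 3]
  exact mul_le_mul_of_nonneg_right hpoly (by positivity)

lemma three_mul_exp_neg_two_div_le : 3 * exp (-2) * (1 - exp (-2))⁻¹ ≤ 1 / 2 := by
  have h7 : 7 ≤ exp 2 := by
    rw [show (2 : ℝ) = 1 + 1 by norm_num, exp_add]
    nlinarith [exp_one_gt_d9]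
  have hinv : 3 * exp (-2) * (1 - exp (-2))⁻¹ = 3 / (exp 2 - 1) := by
    rw [exp_neg]
    field_simp
  rw [hinv, div_le_div_iff₀ (by linarith) two_pos]
  linarith

theorem gaussian_tail_sum_small (k γ₀ : ℝ) (hk : 1 ≤ k) (hγ₀ : 3 ≤ γ₀) :
    (∑' n : ℕ, if ⌈Real.log γ₀⌉₊ ≤ n then
        Real.exp (-(k * (n : ℝ) ^ 2 / 2)) * Real.log ((n : ℝ) + γ₀) else 0) ≤ 1 / 2 := by
  set f : ℕ → ℝ := fun n => if ⌈log γ₀⌉₊ ≤ n then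
    exp (-(k * (n : ℝ) ^ 2 / 2)) * log ((n : ℝ) + γ₀) else 0
  have hN : 2 ≤ ⌈log γ₀⌉₊ := Nat.lt_ceil.mpr (by exact_mod_cast one_lt_log_of_three_le hγ₀)
  have hshift : ∑' m, f (m + 2) = ∑' n, f n := (add_left_injective 2).tsum_eq fun n hn ↦
    ⟨n - 2, Nat.sub_add_cancel (hN.trans (of_not_not fun h ↦ hn (if_neg h)))⟩
  have hbound (m : ℕ) : f (m + 2) ≤ 3 * exp (-2) * exp (-2) ^ m := by
    refine le_trans ?_ (succ_mul_exp_neg_sq_half_le_geometric m)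
    simp only [f]
    split_ifs with h
    · refine exp_neg_mul_sq_mul_log_add_le hk (Nat.cast_nonneg _) (by linarith) ?_
      rw [← exp_log (by linarith : 0 < γ₀)]
      exact exp_le_exp.mpr ((Nat.le_ceil _).trans (by exact_mod_cast h))
    · positivity
  have hnonneg (m : ℕ) : 0 ≤ f (m + 2) := by
    simp only [f]
    split_ifs
    · exact mul_nonneg (exp_pos _).le (log_nonneg (by push_cast; linarith))
    · rfl
  have hgeom : Summable fun m : ℕ ↦ 3 * exp (-2) * exp (-2) ^ m :=
    (summable_geometric_of_lt_one (exp_pos _).le (exp_lt_one_iff.mpr (by norm_num))).mul_left _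
  rw [← hshift]
  calc ∑' m, f (m + 2) ≤ ∑' m : ℕ, 3 * exp (-2) * exp (-2) ^ m :=
        (hgeom.of_nonneg_of_le hnonneg hbound).tsum_le_tsum hbound hgeom
    _ = 3 * exp (-2) * (1 - exp (-2))⁻¹ := by
        rw [tsum_mul_left, tsum_geometric_of_lt_one (exp_pos _).le
          (exp_lt_one_iff.mpr (by norm_num))]
    _ ≤ 1 / 2 := three_mul_exp_neg_two_div_le
end

section
/- Let n be a positive integer and z₁, ..., z_n complex numbers, each with modulus equal to r > 0. Suppose that for all integers ν with m < ν ≤ m + n one has |∑_j z_j^ν| ≤ B r^ν. Then B ≥ (n/(4e(m+n)))^n. -/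
open Finset Polynomial

lemma PS_hockey (a k : ℕ) :
    ∑ i ∈ range (k + 1), Nat.choose (a + i - 1) i = Nat.choose (a + k) k := by
  induction k with
  | zero => simp
  | succ k ih =>
    rw [Finset.sum_range_succ, ih]
    have h1 : a + (k + 1) - 1 = a + k := by omega
    have h2 : a + (k + 1) = (a + k) + 1 := by omega
    rw [h1, h2]
    exact (Nat.choose_succ_succ' (a + k) k).symm ▸ rfl

lemma PS_geom_inv (u : ℂ) :
    ((1 - Polynomial.C u * Polynomial.X : Polynomial ℂ) : PowerSeries ℂ) *
      PowerSeries.mk (fun k => u ^ k) = 1 := by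
  push_cast
  ext k
  rw [sub_mul, one_mul, map_sub]
  cases k with
  | zero => simp
  | succ k =>
    rw [mul_assoc, PowerSeries.coeff_C_mul, PowerSeries.coeff_succ_X_mul]
    simp [pow_succ, mul_comm]

lemma PS_exists_inv {ι : Type*} (c : ℝ) (s : Finset ι) (u : ι → ℂ)
    (hu : ∀ j ∈ s, ‖u j‖ ≤ c) :
    ∃ W : PowerSeries ℂ,
      ((∏ j ∈ s, (1 - Polynomial.C (u j) * Polynomial.X) : Polynomial ℂ) : PowerSeries ℂ) * W = 1 ∧
      ∀ k, ‖PowerSeries.coeff k W‖ ≤ (s.card + k - 1).choose k * c ^ k := by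
  classical
  induction s using Finset.induction_on with
  | empty =>
    refine ⟨1, by simp, fun k => ?_⟩
    rw [PowerSeries.coeff_one]
    cases k with
    | zero => simp
    | succ k => simp [Nat.choose_eq_zero_of_lt (Nat.lt_succ_self k)]
  | insert a s ha ih =>
    obtain ⟨W, hW, hWb⟩ := ih (fun j hj => hu j (Finset.mem_insert_of_mem hj))
    have hua : ‖u a‖ ≤ c := hu a (Finset.mem_insert_self a s)
    have hc : 0 ≤ c := (norm_nonneg _).trans hua
    refine ⟨W * PowerSeries.mk (fun k => u a ^ k), ?_, ?_⟩
    · rw [Finset.prod_insert ha, Polynomial.coe_mul]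
      calc (((1 - Polynomial.C (u a) * Polynomial.X : Polynomial ℂ) : PowerSeries ℂ) *
            ((∏ j ∈ s, (1 - Polynomial.C (u j) * Polynomial.X) : Polynomial ℂ) : PowerSeries ℂ)) *
            (W * PowerSeries.mk (fun k => u a ^ k))
          = (((∏ j ∈ s, (1 - Polynomial.C (u j) * Polynomial.X) : Polynomial ℂ) : PowerSeries ℂ) * W) *
            (((1 - Polynomial.C (u a) * Polynomial.X : Polynomial ℂ) : PowerSeries ℂ) *
              PowerSeries.mk (fun k => u a ^ k)) := by ring
        _ = 1 := by rw [hW, PS_geom_inv, one_mul]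
    · intro k
      rw [PowerSeries.coeff_mul, Finset.Nat.sum_antidiagonal_eq_sum_range_succ_mk]
      have key : ∀ i ∈ range (k + 1),
          ‖PowerSeries.coeff i W *
            PowerSeries.coeff (k - i) (PowerSeries.mk (fun k => u a ^ k))‖
          ≤ ((s.card + i - 1).choose i : ℝ) * c ^ k := by
        intro i hi
        rw [Finset.mem_range, Nat.lt_succ_iff] at hi
        rw [norm_mul, PowerSeries.coeff_mk, norm_pow]
        calc ‖PowerSeries.coeff i W‖ * ‖u a‖ ^ (k - i)
            ≤ ((s.card + i - 1).choose i : ℝ) * c ^ i * c ^ (k - i) := by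
              apply mul_le_mul (hWb i) (pow_le_pow_left₀ (norm_nonneg _) hua _)
                (pow_nonneg (norm_nonneg _) _)
                (mul_nonneg (Nat.cast_nonneg _) (pow_nonneg hc _))
          _ = ((s.card + i - 1).choose i : ℝ) * c ^ k := by
              rw [mul_assoc, ← pow_add, Nat.add_sub_cancel' hi]
      calc ‖∑ i ∈ range (k + 1), PowerSeries.coeff i W *
              PowerSeries.coeff (k - i) (PowerSeries.mk (fun k => u a ^ k))‖
          ≤ ∑ i ∈ range (k + 1), ‖PowerSeries.coeff i W *
              PowerSeries.coeff (k - i) (PowerSeries.mk (fun k => u a ^ k))‖ :=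
            norm_sum_le _ _
        _ ≤ ∑ i ∈ range (k + 1), ((s.card + i - 1).choose i : ℝ) * c ^ k :=
            Finset.sum_le_sum key
        _ = (((s.card + k).choose k : ℕ) : ℝ) * c ^ k := by
            rw [← Finset.sum_mul, ← Nat.cast_sum, PS_hockey]
        _ = ((insert a s).card + k - 1).choose k * c ^ k := by
            rw [Finset.card_insert_of_notMem ha,
              show s.card + 1 + k - 1 = s.card + k by omega]


lemma PS_G_coeff_bound {ι : Type*} (c : ℝ) (hc : 0 ≤ c) (s : Finset ι) (u : ι → ℂ)
    (hu : ∀ j ∈ s, ‖u j‖ ≤ c) (k : ℕ) :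
    ‖(∏ j ∈ s, (1 - Polynomial.C (u j) * Polynomial.X) : Polynomial ℂ).coeff k‖
      ≤ (s.card).choose k * c ^ k := by
  classical
  induction s using Finset.induction_on generalizing k with
  | empty =>
    cases k with
    | zero => simp
    | succ k => simp [Polynomial.coeff_one, Nat.choose_eq_zero_of_lt (Nat.succ_pos k)]
  | insert a s ha ih =>
    have hua : ‖u a‖ ≤ c := hu a (Finset.mem_insert_self a s)
    have ih' := fun k => ih (fun j hj => hu j (Finset.mem_insert_of_mem hj)) k
    rw [Finset.prod_insert ha, Finset.card_insert_of_notMem ha]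
    have expand : ((1 - Polynomial.C (u a) * Polynomial.X) *
        ∏ j ∈ s, (1 - Polynomial.C (u j) * Polynomial.X) : Polynomial ℂ)
        = (∏ j ∈ s, (1 - Polynomial.C (u j) * Polynomial.X))
          - Polynomial.C (u a) * (Polynomial.X * ∏ j ∈ s, (1 - Polynomial.C (u j) * Polynomial.X)) := by
      ring
    rw [expand]
    set P : Polynomial ℂ := ∏ j ∈ s, (1 - Polynomial.C (u j) * Polynomial.X) with hP
    cases k with
    | zero =>
      rw [Polynomial.coeff_sub, Polynomial.coeff_C_mul, Polynomial.coeff_X_mul_zero]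
      simpa using ih' 0
    | succ k =>
      rw [Polynomial.coeff_sub, Polynomial.coeff_C_mul, Polynomial.coeff_X_mul]
      calc ‖P.coeff (k + 1) - u a * P.coeff k‖
          ≤ ‖P.coeff (k + 1)‖ + ‖u a‖ * ‖P.coeff k‖ := by
            rw [← norm_mul]; exact norm_sub_le _ _ |>.trans (le_refl _)
        _ ≤ (s.card).choose (k + 1) * c ^ (k + 1) + c * ((s.card).choose k * c ^ k) := by
            have h1 := ih' (k + 1)
            have h2 := ih' k
            have h3 : ‖u a‖ * ‖P.coeff k‖
                ≤ c * (((s.card).choose k : ℝ) * c ^ k) :=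
              mul_le_mul hua h2 (norm_nonneg _) hc
            linarith
        _ = (((s.card).choose (k + 1) + (s.card).choose k : ℕ) : ℝ) * c ^ (k + 1) := by
            push_cast; ring
        _ = ((s.card + 1).choose (k + 1)) * c ^ (k + 1) := by
            rw [Nat.choose_succ_succ' s.card k]; push_cast; ring

lemma PS_choose_le_two_pow (n i : ℕ) : Nat.choose n i ≤ 2 ^ n := by
  rcases le_or_gt i n with h | h
  · calc Nat.choose n i ≤ ∑ j ∈ range (n + 1), Nat.choose n j :=
        Finset.single_le_sum (fun j _ => Nat.zero_le _) (by simp [Nat.lt_succ_iff, h])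
      _ = 2 ^ n := Nat.sum_range_choose n
  · simp [Nat.choose_eq_zero_of_lt h]

theorem power_sum_contrapositive (n m : ℕ) (hn : 0 < n) (hm : 0 < m)
    (z : Fin n → ℂ) (r B : ℝ) (hr : 0 < r) (hmod : ∀ j, ‖z j‖ = r)
    (hB : ∀ ν : ℕ, m < ν → ν ≤ m + n → ‖∑ j, z j ^ ν‖ ≤ B * r ^ ν) :
    B ≥ ((n : ℝ) / (4 * Real.exp 1 * (m + n))) ^ n := by
  classical
  set c : ℝ := r⁻¹ with hcdef
  have hc0 : 0 ≤ c := by positivity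
  have hz : ∀ j, z j ≠ 0 := by
    intro j h
    have := hmod j
    rw [h] at this
    simp at this
    exact hr.ne' this.symm
  set u : Fin n → ℂ := fun j => (z j)⁻¹ with hu_def
  have hu : ∀ j ∈ (Finset.univ : Finset (Fin n)), ‖u j‖ ≤ c := by
    intro j _
    rw [hu_def]
    simp only [norm_inv, hmod j]
    exact le_refl _
  obtain ⟨W, hW, hWb⟩ := PS_exists_inv c Finset.univ u hu
  set G : Polynomial ℂ := ∏ j, (1 - Polynomial.C (u j) * Polynomial.X) with hG
  have hcard : (Finset.univ : Finset (Fin n)).card = n := by simp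
  have hWb' : ∀ k, ‖PowerSeries.coeff k W‖ ≤ (n + k - 1).choose k * c ^ k := by
    intro k; have := hWb k; rwa [hcard] at this
  have hGb : ∀ k, ‖G.coeff k‖ ≤ (2:ℝ) ^ n * c ^ k := by
    intro k
    refine (PS_G_coeff_bound c hc0 Finset.univ u hu k).trans ?_
    rw [hcard]
    have : ((n.choose k : ℕ) : ℝ) ≤ (2:ℝ) ^ n := by
      have := PS_choose_le_two_pow n k
      calc ((n.choose k : ℕ) : ℝ) ≤ ((2 ^ n : ℕ) : ℝ) := by exact_mod_cast this
        _ = (2:ℝ) ^ n := by push_cast; ring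
    exact mul_le_mul_of_nonneg_right this (pow_nonneg hc0 k)
  set H : Polynomial ℂ := PowerSeries.trunc (m + 1) W with hH
  set F : Polynomial ℂ := G * H - 1 with hF
  -- degrees
  have hGdeg : G.natDegree ≤ n := by
    rw [hG]
    refine (Polynomial.natDegree_prod_le _ _).trans ?_
    have : ∀ j ∈ (Finset.univ : Finset (Fin n)),
        (1 - Polynomial.C (u j) * Polynomial.X : Polynomial ℂ).natDegree ≤ 1 := by
      intro j _
      refine (Polynomial.natDegree_sub_le _ _).trans ?_
      simp only [Polynomial.natDegree_one, max_le_iff]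
      refine ⟨Nat.zero_le _, ?_⟩
      exact (Polynomial.natDegree_C_mul_le _ _).trans (le_of_eq Polynomial.natDegree_X)
    calc ∑ j, (1 - Polynomial.C (u j) * Polynomial.X : Polynomial ℂ).natDegree
        ≤ ∑ _j : Fin n, 1 := Finset.sum_le_sum this
      _ = n := by simp
  have hHdeg : H.natDegree ≤ m := Nat.lt_succ_iff.mp (PowerSeries.natDegree_trunc_lt W m)
  have hFdeg : F.natDegree < n + m + 1 := by
    rw [hF]
    refine Nat.lt_succ_of_le ?_
    refine (Polynomial.natDegree_sub_le _ _).trans ?_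
    simp only [Polynomial.natDegree_one, max_le_iff]
    exact ⟨(Polynomial.natDegree_mul_le).trans (by omega), Nat.zero_le _⟩
  -- low coefficients vanish
  have hGH : ∀ d ≤ m, (G * H).coeff d = if d = 0 then 1 else 0 := by
    intro d hd
    have h1 : (G * H).coeff d = PowerSeries.coeff d ((G : PowerSeries ℂ) * (H : PowerSeries ℂ)) := by
      rw [← Polynomial.coe_mul, Polynomial.coeff_coe]
    have h2 : PowerSeries.coeff d ((G : PowerSeries ℂ) * (H : PowerSeries ℂ))
        = PowerSeries.coeff d ((G : PowerSeries ℂ) * W) := by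
      rw [PowerSeries.coeff_mul, PowerSeries.coeff_mul]
      refine Finset.sum_congr rfl ?_
      intro p hp
      rw [Finset.HasAntidiagonal.mem_antidiagonal] at hp
      congr 1
      exact PowerSeries.coeff_coe_trunc_of_lt (by omega)
    rw [h1, h2, hW, PowerSeries.coeff_one]
  have hFc0 : ∀ d ≤ m, F.coeff d = 0 := by
    intro d hd
    rw [hF, Polynomial.coeff_sub, hGH d hd, Polynomial.coeff_one]
    simp
  -- high coefficient bound
  have hFbound : ∀ d, m < d → ‖F.coeff d‖
      ≤ (2:ℝ) ^ n * ((n + m).choose m : ℝ) * c ^ d := by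
    intro d hd
    have hd0 : d ≠ 0 := by omega
    have hcoef : F.coeff d = (G * H).coeff d := by
      rw [hF, Polynomial.coeff_sub, Polynomial.coeff_one, if_neg hd0, sub_zero]
    rw [hcoef, Polynomial.coeff_mul, Finset.Nat.sum_antidiagonal_eq_sum_range_succ_mk]
    have hHb : ∀ l, ‖H.coeff l‖
        ≤ (if l ≤ m then (((n + l - 1).choose l : ℕ) : ℝ) else 0) * c ^ l := by
      intro l
      rw [hH, PowerSeries.coeff_trunc]
      by_cases hl : l < m + 1
      · rw [if_pos hl, if_pos (by omega)]
        exact hWb' l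
      · rw [if_neg hl, if_neg (by omega), norm_zero, zero_mul]
    have hterm : ∀ i ∈ range (d + 1),
        ‖G.coeff i * H.coeff (d - i)‖
        ≤ ((2:ℝ) ^ n * c ^ d) * (if d - i ≤ m then (((n + (d - i) - 1).choose (d - i) : ℕ) : ℝ) else 0) := by
      intro i hi
      rw [Finset.mem_range, Nat.lt_succ_iff] at hi
      rw [norm_mul]
      calc ‖G.coeff i‖ * ‖H.coeff (d - i)‖
          ≤ ((2:ℝ) ^ n * c ^ i) *
            ((if d - i ≤ m then (((n + (d - i) - 1).choose (d - i) : ℕ) : ℝ) else 0) * c ^ (d - i)) := by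
            refine mul_le_mul (hGb i) (hHb (d - i)) (norm_nonneg _) ?_
            positivity
        _ = ((2:ℝ) ^ n * c ^ d) * (if d - i ≤ m then (((n + (d - i) - 1).choose (d - i) : ℕ) : ℝ) else 0) := by
            rw [show c ^ d = c ^ i * c ^ (d - i) by rw [← pow_add, Nat.add_sub_cancel' hi]]
            ring
    calc ‖∑ i ∈ range (d + 1), G.coeff i * H.coeff (d - i)‖
        ≤ ∑ i ∈ range (d + 1), ‖G.coeff i * H.coeff (d - i)‖ :=
          norm_sum_le _ _
      _ ≤ ∑ i ∈ range (d + 1), ((2:ℝ) ^ n * c ^ d) *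
            (if d - i ≤ m then (((n + (d - i) - 1).choose (d - i) : ℕ) : ℝ) else 0) :=
          Finset.sum_le_sum hterm
      _ = ((2:ℝ) ^ n * c ^ d) * ∑ i ∈ range (d + 1),
            (if d - i ≤ m then (((n + (d - i) - 1).choose (d - i) : ℕ) : ℝ) else 0) := by
          rw [← Finset.mul_sum]
      _ = ((2:ℝ) ^ n * c ^ d) * ∑ l ∈ range (d + 1),
            (if l ≤ m then (((n + l - 1).choose l : ℕ) : ℝ) else 0) := by
          congr 1
          have hrefl := Finset.sum_range_reflect
            (fun l => (if l ≤ m then (((n + l - 1).choose l : ℕ) : ℝ) else 0)) (d + 1)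
          simp only [Nat.add_sub_cancel] at hrefl
          exact hrefl
      _ = ((2:ℝ) ^ n * c ^ d) * ∑ l ∈ range (m + 1), (((n + l - 1).choose l : ℕ) : ℝ) := by
          congr 1
          rw [← Finset.sum_subset (Finset.range_subset_range.mpr (by omega : m + 1 ≤ d + 1))
            (fun x _ hx => by rw [if_neg (by simp [Finset.mem_range] at hx ⊢; omega)])]
          refine Finset.sum_congr rfl ?_
          intro l hl
          rw [Finset.mem_range, Nat.lt_succ_iff] at hl
          rw [if_pos hl]
      _ = (2:ℝ) ^ n * ((n + m).choose m : ℝ) * c ^ d := by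
          rw [← Nat.cast_sum, PS_hockey]
          ring
  -- evaluation facts
  have hGeval : ∀ j, G.eval (z j) = 0 := by
    intro j
    rw [hG, Polynomial.eval_prod]
    refine Finset.prod_eq_zero (Finset.mem_univ j) ?_
    rw [Polynomial.eval_sub, Polynomial.eval_mul, Polynomial.eval_C, Polynomial.eval_X,
      Polynomial.eval_one, hu_def]
    simp [inv_mul_cancel₀ (hz j)]
  have hFeval : ∀ j, F.eval (z j) = -1 := by
    intro j
    rw [hF, Polynomial.eval_sub, Polynomial.eval_mul, hGeval j, zero_mul, Polynomial.eval_one]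
    ring
  -- the key sum identity
  have hsum : ∑ j, F.eval (z j) = ∑ d ∈ range (n + m + 1), F.coeff d * ∑ j, z j ^ d := by
    calc ∑ j, F.eval (z j)
        = ∑ j, ∑ d ∈ range (n + m + 1), F.coeff d * z j ^ d :=
          Finset.sum_congr rfl (fun j _ => Polynomial.eval_eq_sum_range' hFdeg _)
      _ = ∑ d ∈ range (n + m + 1), ∑ j, F.coeff d * z j ^ d := Finset.sum_comm
      _ = ∑ d ∈ range (n + m + 1), F.coeff d * ∑ j, z j ^ d := by
          refine Finset.sum_congr rfl ?_
          intro d _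
          rw [Finset.mul_sum]
  have hsumval : ∑ j, F.eval (z j) = -(n : ℂ) := by
    simp [hFeval]
  have habs : (n : ℝ) = ‖∑ d ∈ range (n + m + 1), F.coeff d * ∑ j, z j ^ d‖ := by
    rw [← hsum, hsumval, norm_neg]
    simp
  set K : ℝ := (2:ℝ) ^ n * ((n + m).choose m : ℝ) with hKdef
  have hKpos : 0 < K := by
    have h1 : 0 < (n + m).choose m := Nat.choose_pos (by omega)
    have : (0:ℝ) < ((n + m).choose m : ℝ) := by exact_mod_cast h1
    positivity
  have hcr : c * r = 1 := inv_mul_cancel₀ hr.ne'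
  have hBnn : 0 ≤ B := by
    have h1 := hB (m + 1) (by omega) (by omega)
    have h2 : (0:ℝ) ≤ B * r ^ (m + 1) := (norm_nonneg _).trans h1
    nlinarith [pow_pos hr (m + 1)]
  have key : (n : ℝ) ≤ (n : ℝ) * (K * B) := by
    calc (n : ℝ) = ‖∑ d ∈ range (n + m + 1), F.coeff d * ∑ j, z j ^ d‖ := habs
      _ ≤ ∑ d ∈ range (n + m + 1), ‖F.coeff d * ∑ j, z j ^ d‖ :=
          norm_sum_le _ _
      _ ≤ ∑ d ∈ range (n + m + 1), (if m < d then K * B else 0) := by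
          refine Finset.sum_le_sum ?_
          intro d hd
          rw [Finset.mem_range] at hd
          by_cases hdm : m < d
          · rw [if_pos hdm, norm_mul]
            calc ‖F.coeff d‖ * ‖∑ j, z j ^ d‖
                ≤ (K * c ^ d) * (B * r ^ d) := by
                  refine mul_le_mul (hFbound d hdm) (hB d hdm (by omega))
                    (norm_nonneg _) ?_
                  positivity
              _ = (K * B) * (c * r) ^ d := by rw [mul_pow]; ring
              _ = K * B := by rw [hcr, one_pow, mul_one]
          · rw [if_neg hdm, hFc0 d (by omega), zero_mul, norm_zero]
      _ = (n : ℝ) * (K * B) := by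
          rw [← Finset.sum_filter]
          have hfil : (range (n + m + 1)).filter (fun d => m < d) = Finset.Ioc m (n + m) := by
            ext x
            simp only [Finset.mem_filter, Finset.mem_range, Finset.mem_Ioc]
            omega
          rw [hfil, Finset.sum_const, Nat.card_Ioc]
          rw [show n + m - m = n by omega]
          simp [nsmul_eq_mul]
  have hnR : (0:ℝ) < n := by exact_mod_cast hn
  have hKB : 1 ≤ K * B := by
    by_contra hcon
    push_neg at hcon
    nlinarith
  have hBK : 1 / K ≤ B := by
    rw [div_le_iff₀ hKpos]
    linarith [mul_comm K B]
  -- final analytic estimate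
  have e1 : (0:ℝ) < Real.exp 1 := Real.exp_pos 1
  have hmn : (0:ℝ) < (m:ℝ) + n := by positivity
  have hnR' : (0:ℝ) < (n:ℝ) := hnR
  have hfact : ((n:ℝ)) ^ n / (n.factorial : ℝ) ≤ Real.exp 1 ^ n := by
    rw [Real.exp_one_pow]
    exact Real.pow_div_factorial_le_exp (x := (n:ℝ)) (Nat.cast_nonneg n) n
  have hfactpos : (0:ℝ) < (n.factorial : ℝ) := by exact_mod_cast n.factorial_pos
  have hchoose : (((n + m).choose m : ℕ) : ℝ) ≤ (Real.exp 1 * ((m:ℝ) + n) / n) ^ n := by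
    have hsymm : (n + m).choose m = (m + n).choose n := by
      rw [Nat.add_comm n m]
      have := Nat.choose_symm (Nat.le_add_left n m)
      rwa [Nat.add_sub_cancel] at this
    rw [hsymm]
    have h1 : (((m + n).choose n : ℕ) : ℝ) ≤ ((m + n : ℕ) : ℝ) ^ n / (n.factorial : ℝ) := by
      have := Nat.choose_le_pow_div (α := ℝ) n (m + n)
      simpa using this
    refine h1.trans ?_
    rw [div_pow, mul_pow]
    rw [div_le_div_iff₀ hfactpos (by positivity : (0:ℝ) < (n:ℝ) ^ n)]
    have h2 : ((n:ℝ)) ^ n ≤ Real.exp 1 ^ n * (n.factorial : ℝ) := by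
      have := (div_le_iff₀ hfactpos).mp hfact
      linarith
    have h3 : (0:ℝ) ≤ ((m + n : ℕ) : ℝ) ^ n := by positivity
    push_cast
    push_cast at h3 h2
    nlinarith
  have hKL : K ≤ (2 * (Real.exp 1 * ((m:ℝ) + n) / n)) ^ n := by
    rw [hKdef, mul_pow 2]
    exact mul_le_mul_of_nonneg_left hchoose (by positivity)
  have haL : ((n:ℝ) / (4 * Real.exp 1 * ((m:ℝ) + n))) * (2 * (Real.exp 1 * ((m:ℝ) + n) / n))
      = 1 / 2 := by
    field_simp
    ring
  have hfinal : ((n:ℝ) / (4 * Real.exp 1 * ((m:ℝ) + n))) ^ n ≤ 1 / K := by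
    rw [le_div_iff₀ hKpos]
    calc ((n:ℝ) / (4 * Real.exp 1 * ((m:ℝ) + n))) ^ n * K
        ≤ ((n:ℝ) / (4 * Real.exp 1 * ((m:ℝ) + n))) ^ n *
            (2 * (Real.exp 1 * ((m:ℝ) + n) / n)) ^ n :=
          mul_le_mul_of_nonneg_left hKL (by positivity)
      _ = (1 / 2 : ℝ) ^ n := by rw [← mul_pow, haL]
      _ ≤ 1 := pow_le_one₀ (by norm_num) (by norm_num)
  exact hfinal.trans hBK
end
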